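/- arXiv:1001.3590 — 2 statements merged into one kernel-verified Lean document; each statement's English description precedes it below -/
import Mathlib

section
/- Let k, L₁, L₂ be kernels on X with values in L(A,B). Then the M₂(B)-valued kernel K(x,y)[a] = [[L₁(x,y)[a], k(x,y)[a]], [k*(x,y)[a], L₂(x,y)[a]]] is completely positive if and only if for every finite subset {x_1,…,x_n} of X the block map M₂(M_n(A)) → M₂(M_n(B)) sending [[A, B],[C, D]] to [[S_{L₁}(A), S_k(B)],[S_{k*}(C), S_{L₂}(D)]] is completely positive, where S_k : M_n(A) → M_n(B) denotes the Schur map (a_{ij}) ↦ (k(x_i,x_j)[a_{ij}]) and similarly for S_{L₁}, S_{L₂}, S_{k*}. -/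
open scoped ComplexOrder InnerProductSpace Matrix

section Defs

variable {X : Type*}

/-- Positivity in the C*-algebra of `ι × ι` matrices over `R`: an element is
positive iff it factors as `Nᴴ * N`. -/
def MatPos {R ι : Type*} [Fintype ι] [NonUnitalSemiring R] [StarRing R]
    (M : Matrix ι ι R) : Prop :=
  ∃ N : Matrix ι ι R, M = Nᴴ * N

/-- `‖M‖ ≤ c` in the C*-algebra of `ι × ι` matrices over the unital C*-algebra `R`,
expressed via positivity of `c ^ 2 • 1 - Mᴴ * M`. -/
def MatNormLe {R ι : Type*} [Fintype ι] [DecidableEq ι] [Ring R] [StarRing R] [Module ℂ R]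
    (M : Matrix ι ι R) (c : ℝ) : Prop :=
  0 ≤ c ∧ MatPos (((c : ℂ) ^ 2) • (1 : Matrix ι ι R) - Mᴴ * M)

variable {A : Type*} [CStarAlgebra A]
variable {B : Type*} [CStarAlgebra B] [PartialOrder B] [StarOrderedRing B]

/-- A kernel on `X` with values in `L(A,B)` is completely positive. -/
def IsCPKernel (k : X → X → A →L[ℂ] B) : Prop :=
  ∀ (n : ℕ) (x : Fin n → X) (a : Fin n → A) (b : Fin n → B),
    0 ≤ ∑ i : Fin n, ∑ j : Fin n, star (b i) * (k (x i) (x j) (star (a i) * a j)) * b j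

/-- The adjoint kernel `k*`, given by `k*(x,y)[a] = (k(y,x)[a*])*`. -/
noncomputable def kadj (k : X → X → A →L[ℂ] B) (x y : X) : A →L[ℂ] B :=
  { toFun := fun a => star (k y x (star a))
    map_add' := by intros; simp
    map_smul' := by intros; simp [star_smul]
    cont := continuous_star.comp ((k y x).continuous.comp continuous_star) }

@[simp] theorem kadj_apply (k : X → X → A →L[ℂ] B) (x y : X) (a : A) :
    kadj k x y a = star (k y x (star a)) := rfl

/-- The Schur product map `M_n(A) → M_n(B)` associated to the kernel `k` and the
finite family `x_1, …, x_n` in `X`. -/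
noncomputable def schurMap {n : ℕ} (k : X → X → A →L[ℂ] B) (x : Fin n → X)
    (M : Matrix (Fin n) (Fin n) A) : Matrix (Fin n) (Fin n) B :=
  Matrix.of fun i j => k (x i) (x j) (M i j)

/-- The `m`-th amplification `φ ⊗ id_{M_m}` of a map `φ : M_ι(A) → M_ι(B)`, realized on
`M_{m·ι}` via the canonical identification `M_m(M_ι(·)) ≅ M_{m·ι}(·)`. -/
def ampl {ι : Type*} (φ : Matrix ι ι A → Matrix ι ι B) (m : ℕ)
    (M : Matrix (Fin m × ι) (Fin m × ι) A) : Matrix (Fin m × ι) (Fin m × ι) B :=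
  Matrix.of fun p q => φ (Matrix.of fun i j => M (p.1, i) (q.1, j)) p.2 q.2

/-- A map `M_ι(A) → M_ι(B)` is completely positive: all amplifications preserve positivity. -/
def IsCPMap {ι : Type*} [Fintype ι] (φ : Matrix ι ι A → Matrix ι ι B) : Prop :=
  ∀ (m : ℕ) (M : Matrix (Fin m × ι) (Fin m × ι) A), MatPos M → MatPos (ampl φ m M)

/-- A map `M_ι(A) → M_ι(B)` is completely bounded: the norms of all amplifications
are uniformly bounded by some `C`. -/
def IsCBMap {ι : Type*} [Fintype ι] [DecidableEq ι] (φ : Matrix ι ι A → Matrix ι ι B) : Prop :=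
  ∃ C : ℝ, ∀ (m : ℕ) (M : Matrix (Fin m × ι) (Fin m × ι) A) (c : ℝ),
    MatNormLe M c → MatNormLe (ampl φ m M) (C * c)

/-- A kernel is completely bounded if for every finite family of points the associated
Schur product map is completely bounded. -/
def IsCBKernel (k : X → X → A →L[ℂ] B) : Prop :=
  ∀ (n : ℕ) (x : Fin n → X), IsCBMap (schurMap k x)

/-- Complete positivity for a kernel on `X` with values in the maps `A → M₂(B)`,
positivity in `M₂(B)` being positivity in the C*-algebra of `2 × 2` matrices over `B`. -/
def IsCPKernelM (K : X → X → A → Matrix (Fin 2) (Fin 2) B) : Prop :=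
  ∀ (n : ℕ) (x : Fin n → X) (a : Fin n → A) (b : Fin n → Matrix (Fin 2) (Fin 2) B),
    MatPos (∑ i : Fin n, ∑ j : Fin n, (b i)ᴴ * (K (x i) (x j) (star (a i) * a j)) * b j)

/-- Complete positivity for a kernel on `X` with values in the maps `M₂(A) → M₂(B)`. -/
def IsCPKernelMM (K : X → X → Matrix (Fin 2) (Fin 2) A → Matrix (Fin 2) (Fin 2) B) : Prop :=
  ∀ (n : ℕ) (x : Fin n → X) (c : Fin n → Matrix (Fin 2) (Fin 2) A)
    (d : Fin n → Matrix (Fin 2) (Fin 2) B),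
    MatPos (∑ i : Fin n, ∑ j : Fin n, (d i)ᴴ * (K (x i) (x j) ((c i)ᴴ * c j)) * d j)

/-- The `2 × 2` block map `M₂(M_ι(A)) → M₂(M_ι(B))` determined by four maps
`M_ι(A) → M_ι(B)`, realized on `M_{2·ι}` via the canonical shuffle. -/
def blockMap {ι : Type*} (f : Fin 2 → Fin 2 → (Matrix ι ι A → Matrix ι ι B))
    (M : Matrix (Fin 2 × ι) (Fin 2 × ι) A) : Matrix (Fin 2 × ι) (Fin 2 × ι) B :=
  Matrix.of fun p q => f p.1 q.1 (Matrix.of fun i j => M (p.1, i) (q.1, j)) p.2 q.2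

end Defs


/-!
Both sides say that the block Gram matrices `[K(x_p, x_q)(a_p* a_q)_{s t}]_{(p,s),(q,t)}` of the
`M₂(B)`-valued kernel `K = [[L₁, k], [k*, L₂]]` are positive. The kernel condition tests them
against block columns `(b_i)`. The amplified block Schur map sends the rank-one positive matrix
`(a_p* a_q)` to such a Gram matrix (after reindexing), and a general positive `Nᴴ N` to a sum of
compressions of Gram matrices.

Positivity in `M_n(B)` is identified with nonnegativity of all `B`-valued quadratic forms
`∑ v_p* M_pq v_q`: if `M` has this property, its negative part `P` satisfies `P M P = -P³`, so `P³`
has both nonnegative and nonpositive forms, whence `P³ = 0` and `P = 0`.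
-/

open Matrix

theorem Matrix.eq_zero_of_forall_star_dotProduct_mulVec_eq_zero {ι R : Type*} [Fintype ι]
    [Ring R] [StarRing R] [Algebra ℂ R] [StarModule ℂ R] {N : Matrix ι ι R}
    (h : ∀ x, star x ⬝ᵥ (N *ᵥ x) = 0) : N = 0 := by
  classical
  have polarization : ∀ x y, star x ⬝ᵥ (N *ᵥ y) = 0 := by
    intro x y
    have h₁ := h (x + y)
    have h₂ := h (x + Complex.I • y)
    simp only [star_add, star_smul, mulVec_add, mulVec_smul, add_dotProduct, dotProduct_add,
      smul_dotProduct, dotProduct_smul, h x, h y, smul_zero, add_zero, zero_add,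
      Complex.star_def, Complex.conj_I] at h₁ h₂
    have : (2 * Complex.I) • (star x ⬝ᵥ (N *ᵥ y)) = 0 := by
      linear_combination (norm := module) Complex.I • h₁ + h₂
    simpa using this
  ext i j
  simpa using polarization (Pi.single i 1) (Pi.single j 1)

theorem Matrix.posSemidef_of_forall_dotProduct_mulVec_nonneg {ι R : Type*} [Fintype ι] [Ring R]
    [PartialOrder R] [StarRing R] [StarOrderedRing R] [Algebra ℂ R] [StarModule ℂ R]
    {M : Matrix ι ι R} (h : ∀ x, 0 ≤ star x ⬝ᵥ (M *ᵥ x)) : M.PosSemidef := by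
  refine .of_dotProduct_mulVec_nonneg ?_ h
  rw [IsHermitian, ← sub_eq_zero]
  refine eq_zero_of_forall_star_dotProduct_mulVec_eq_zero fun x => ?_
  have star_form : star (star x ⬝ᵥ (M *ᵥ x)) = star x ⬝ᵥ (Mᴴ *ᵥ x) := by
    rw [star_dotProduct, star_mulVec, star_star, dotProduct_mulVec]
  rw [sub_mulVec, dotProduct_sub, ← star_form, (IsSelfAdjoint.of_nonneg (h x)).star_eq, sub_self]

theorem Matrix.PosSemidef.eq_zero_of_posSemidef_neg {ι R : Type*} [Fintype ι] [Ring R]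
    [PartialOrder R] [StarRing R] [StarOrderedRing R] [Algebra ℂ R] [StarModule ℂ R]
    {M : Matrix ι ι R} (hM : M.PosSemidef) (hneg : (-M).PosSemidef) : M = 0 :=
  eq_zero_of_forall_star_dotProduct_mulVec_eq_zero fun x =>
    le_antisymm (by simpa [neg_mulVec] using hneg.dotProduct_mulVec_nonneg x)
      (hM.dotProduct_mulVec_nonneg x)

theorem IsSelfAdjoint.eq_zero_of_pow_eq_zero {E : Type*} [NormedRing E] [StarRing E]
    [CStarRing E] {x : E} (hx : IsSelfAdjoint x) {n : ℕ} (h : x ^ n = 0) : x = 0 := by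
  have h₂ : x ^ 2 ^ n = 0 := by
    rw [← Nat.sub_add_cancel n.lt_two_pow_self.le, pow_add, h, mul_zero]
  rw [← norm_eq_zero, ← pow_eq_zero_iff (pow_pos two_pos n).ne', ← hx.norm_pow_two_pow, h₂,
    norm_zero]

theorem matPos_vecMulVec_star_self {ι R : Type*} [Fintype ι] [NonUnitalSemiring R] [StarRing R]
    (u : ι → R) : MatPos (vecMulVec (star u) u) := by
  classical
  rcases isEmpty_or_nonempty ι with hι | ⟨⟨i₀⟩⟩
  · exact ⟨0, Subsingleton.elim _ _⟩
  · refine ⟨of fun w j => if w = i₀ then u j else 0, ?_⟩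
    ext i j
    simp [vecMulVec, Matrix.mul_apply]

section CStarMatrix

variable {ι B : Type*} [Fintype ι] [DecidableEq ι] [CStarAlgebra B] [PartialOrder B]
  [StarOrderedRing B]

-- Instance synthesis does not find these through `CStarMatrix.instCStarAlgebra`.
noncomputable instance CStarMatrix.instContinuousFunctionalCalculusReal :
    ContinuousFunctionalCalculus ℝ (CStarMatrix ι ι B) IsSelfAdjoint :=
  IsSelfAdjoint.instContinuousFunctionalCalculus

instance CStarMatrix.instNonnegSpectrumClassReal : NonnegSpectrumClass ℝ (CStarMatrix ι ι B) :=
  CStarAlgebra.instNonnegSpectrumClass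

local notation "e" => CStarMatrix.ofMatrixStarAlgEquiv (n := ι) (A := B)

theorem matPos_iff_nonneg {M : Matrix ι ι B} : MatPos M ↔ 0 ≤ e M := by
  rw [CStarAlgebra.nonneg_iff_eq_star_mul_self]
  refine ⟨fun ⟨N, hN⟩ => ⟨e N, ?_⟩, fun ⟨b, hb⟩ => ⟨(e).symm b, EquivLike.injective e ?_⟩⟩
  · rw [hN, ← star_eq_conjTranspose, map_mul, map_star]
  · rw [hb, ← star_eq_conjTranspose, map_mul, map_star, StarAlgEquiv.apply_symm_apply]

theorem matPos_iff_posSemidef {M : Matrix ι ι B} : MatPos M ↔ M.PosSemidef := by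
  refine ⟨fun ⟨N, hN⟩ => hN ▸ posSemidef_conjTranspose_mul_self N, fun hM => ?_⟩
  have hsa : IsSelfAdjoint (e M) := by
    rw [IsSelfAdjoint, ← map_star]
    exact congrArg e hM.isHermitian
  rw [matPos_iff_nonneg, CStarAlgebra.nonneg_iff_isSelfAdjoint_and_negPart_eq_zero]
  refine ⟨hsa, ?_⟩
  obtain ⟨p, hp⟩ := EquivLike.surjective e (e M)⁻
  have hp_nonneg : 0 ≤ e p := hp ▸ CFC.negPart_nonneg (e M)
  have hp_psd : p.PosSemidef := matPos_iff_nonneg.2 hp_nonneg |>.elim fun N hN =>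
    hN ▸ posSemidef_conjTranspose_mul_self N
  have hcube : pᴴ * M * p = -(p ^ 3) := by
    apply EquivLike.injective e
    rw [hp_psd.isHermitian.eq, map_mul, map_mul, map_neg, map_pow,
      ← CFC.posPart_sub_negPart (e M), hp, mul_sub, sub_mul, CFC.negPart_mul_posPart]
    simp [pow_succ, mul_assoc]
  have hp3 : p ^ 3 = 0 :=
    (hp_psd.pow 3).eq_zero_of_posSemidef_neg (hcube ▸ hM.conjTranspose_mul_mul_same p)
  rw [← hp]
  refine hp_nonneg.isSelfAdjoint.eq_zero_of_pow_eq_zero (n := 3) ?_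
  rw [← map_pow, hp3, map_zero]

end CStarMatrix

section GramMatrix

variable {X A B : Type*}

def gramMatrix {τ P : Type*} [Mul A] [Star A] (K : X → X → A → Matrix τ τ B) (y : P → X)
    (a : P → A) : Matrix (P × τ) (P × τ) B :=
  of fun p q => K (y p.1) (y q.1) (star (a p.1) * a q.1) p.2 q.2

theorem gramMatrix_comp {τ P Q : Type*} [Mul A] [Star A] (K : X → X → A → Matrix τ τ B)
    (y : P → X) (a : P → A) (f : Q → P) :
    gramMatrix K (y ∘ f) (a ∘ f) = (gramMatrix K y a).submatrix (Prod.map f id) (Prod.map f id) :=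
  rfl

theorem sum_conjTranspose_mul_mul_eq_gramMatrix_conj {τ κ P : Type*} [Fintype τ] [Fintype P]
    [Mul A] [Star A] [NonUnitalSemiring B] [StarRing B] (K : X → X → A → Matrix τ τ B)
    (y : P → X) (a : P → A) (b : P → Matrix τ κ B) :
    ∑ i, ∑ j, (b i)ᴴ * K (y i) (y j) (star (a i) * a j) * b j =
      (of fun p t => b p.1 p.2 t : Matrix (P × τ) κ B)ᴴ * gramMatrix K y a *
        (of fun p t => b p.1 p.2 t : Matrix (P × τ) κ B) := by
  ext s t
  simp only [Matrix.sum_apply, Matrix.mul_apply, Fintype.sum_prod_type, Finset.sum_mul,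
    conjTranspose_apply, gramMatrix, of_apply]
  rw [Finset.sum_comm]
  exact Finset.sum_congr rfl fun _ _ => Finset.sum_comm

variable [CStarAlgebra A] [CStarAlgebra B] [PartialOrder B] [StarOrderedRing B]

theorem IsCPKernelM.posSemidef_gramMatrix {K : X → X → A → Matrix (Fin 2) (Fin 2) B}
    (hK : IsCPKernelM K) {P : Type*} [Fintype P] (y : P → X) (a : P → A) :
    (gramMatrix K y a).PosSemidef := by
  let e := Fintype.equivFin P
  have hya : gramMatrix K y a = gramMatrix K ((y ∘ e.symm) ∘ e) ((a ∘ e.symm) ∘ e) := by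
    simp [Function.comp_def]
  rw [hya, gramMatrix_comp]
  refine PosSemidef.submatrix (posSemidef_of_forall_dotProduct_mulVec_nonneg fun v => ?_) _
  have hv := hK _ (y ∘ e.symm) (a ∘ e.symm) fun i => of fun s _ => v (i, s)
  rw [sum_conjTranspose_mul_mul_eq_gramMatrix_conj, matPos_iff_posSemidef] at hv
  convert hv.diag_nonneg (i := 0) using 1
  simp only [dotProduct, Pi.star_apply, mulVec, Finset.mul_sum, of_apply, Matrix.mul_apply,
    conjTranspose_apply, Finset.sum_mul, mul_assoc]
  rw [Finset.sum_comm]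

theorem isCPKernelM_of_posSemidef_gramMatrix {K : X → X → A → Matrix (Fin 2) (Fin 2) B}
    (h : ∀ n (y : Fin n → X) (a : Fin n → A), (gramMatrix K y a).PosSemidef) :
    IsCPKernelM K := fun n y a b => by
  rw [sum_conjTranspose_mul_mul_eq_gramMatrix_conj, matPos_iff_posSemidef]
  exact (h n y a).conjTranspose_mul_mul_same _

end GramMatrix

section BlockKernel

variable {X A B : Type*} [CStarAlgebra A] [CStarAlgebra B]

noncomputable def blockKernel (k L₁ L₂ : X → X → A →L[ℂ] B) :
    X → X → A → Matrix (Fin 2) (Fin 2) B :=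
  fun x y a => !![L₁ x y a, k x y a; kadj k x y a, L₂ x y a]

theorem blockKernel_sum (k L₁ L₂ : X → X → A →L[ℂ] B) (x y : X) {ι : Type*} (s : Finset ι)
    (a : ι → A) :
    blockKernel k L₁ L₂ x y (∑ w ∈ s, a w) = ∑ w ∈ s, blockKernel k L₁ L₂ x y (a w) := by
  ext i j
  fin_cases i <;> fin_cases j <;> simp [blockKernel, Matrix.sum_apply, map_sum]

theorem ampl_blockMap_schurMap_apply (k L₁ L₂ : X → X → A →L[ℂ] B) {n m : ℕ} (x : Fin n → X)
    (M : Matrix (Fin m × Fin 2 × Fin n) (Fin m × Fin 2 × Fin n) A)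
    (p q : Fin m × Fin 2 × Fin n) :
    ampl (blockMap ![![schurMap L₁ x, schurMap k x], ![schurMap (kadj k) x, schurMap L₂ x]]) m M
      p q = blockKernel k L₁ L₂ (x p.2.2) (x q.2.2) (M p q) p.2.1 q.2.1 := by
  obtain ⟨_, s, _⟩ := p
  obtain ⟨_, t, _⟩ := q
  fin_cases s <;> fin_cases t <;> rfl

theorem ampl_blockMap_schurMap_conjTranspose_mul_self (k L₁ L₂ : X → X → A →L[ℂ] B) {n m : ℕ}
    (x : Fin n → X) (N : Matrix (Fin m × Fin 2 × Fin n) (Fin m × Fin 2 × Fin n) A) :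
    ampl (blockMap ![![schurMap L₁ x, schurMap k x], ![schurMap (kadj k) x, schurMap L₂ x]]) m
        (Nᴴ * N) =
      ∑ w, (gramMatrix (blockKernel k L₁ L₂) (fun p => x p.2.2) (N w)).submatrix
        (fun p => (p, p.2.1)) (fun p => (p, p.2.1)) := by
  ext p q
  rw [ampl_blockMap_schurMap_apply, Matrix.mul_apply, blockKernel_sum, Matrix.sum_apply, Matrix.sum_apply]
  rfl

theorem gramMatrix_blockKernel_eq_submatrix_ampl (k L₁ L₂ : X → X → A →L[ℂ] B) {n : ℕ}
    (x : Fin n → X) (a : Fin n → A) :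
    gramMatrix (blockKernel k L₁ L₂) x a =
      (ampl (blockMap ![![schurMap L₁ x, schurMap k x], ![schurMap (kadj k) x, schurMap L₂ x]]) 1
        (vecMulVec (star fun p => a p.2.2) fun p => a p.2.2)).submatrix
        (fun q => (0, q.2, q.1)) (fun q => (0, q.2, q.1)) := by
  ext p q
  rw [submatrix_apply, ampl_blockMap_schurMap_apply]
  rfl

end BlockKernel

/-- the 2×2 matrix kernel `[[L₁, k], [k*, L₂]]` is completely positive iff
for every finite family of points the associated 2×2 block Schur map
`M₂(M_n(A)) → M₂(M_n(B))` is completely positive. -/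
theorem matrix_kernel_cp_iff_block_schur_cp {X : Type*} {A : Type*} [CStarAlgebra A]
    {B : Type*} [CStarAlgebra B] [PartialOrder B] [StarOrderedRing B]
    (k L₁ L₂ : X → X → A →L[ℂ] B) :
    IsCPKernelM (fun x y a => !![L₁ x y a, k x y a; kadj k x y a, L₂ x y a]) ↔
    ∀ (n : ℕ) (x : Fin n → X),
      IsCPMap (blockMap ![![schurMap L₁ x, schurMap k x],
        ![schurMap (kadj k) x, schurMap L₂ x]]) := by
  change IsCPKernelM (blockKernel k L₁ L₂) ↔ _
  constructor
  · rintro hK n x m M ⟨N, rfl⟩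
    rw [ampl_blockMap_schurMap_conjTranspose_mul_self, matPos_iff_posSemidef]
    exact posSemidef_sum _ fun w _ => (hK.posSemidef_gramMatrix _ _).submatrix _
  · refine fun h => isCPKernelM_of_posSemidef_gramMatrix fun n x a => ?_
    rw [gramMatrix_blockKernel_eq_submatrix_ampl]
    exact (matPos_iff_posSemidef.1 (h n x 1 _ (matPos_vecMulVec_star_self _))).submatrix _
end

section
/- Let A be a unital C*-algebra, H a Hilbert space, and k a kernel on X with values in L(A, L(H)). Let F = {x_1,…,x_n} be a finite subset of X and suppose there exist completely positive maps P₁, P₂ : M_n(A) → M_n(L(H)) such that the map M₂(M_n(A)) → M₂(M_n(L(H))) sending [[A, B],[C, D]] to [[P₁(A), S_{k_F}(B)],[S_{k_F}*(C), P₂(D)]] is completely positive, where S_{k_F} is the Schur map (a_{ij}) ↦ (k(x_i,x_j)[a_{ij}]) and S_{k_F}*(C) = (S_{k_F}(C*))*. Then there exist completely positive kernels L₁, L₂ on F with values in L(A, L(H)) such that the map M₂(M_n(A)) → M₂(M_n(L(H))) sending [[A, B],[C, D]] to [[S_{L₁}(A), S_{k_F}(B)],[S_{k_F}*(C), S_{L₂}(D)]]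 is completely positive. -/
open scoped ComplexOrder InnerProductSpace Matrix

/-! The kernels are read off the entries: `Lᵢⱼ[a] := P(a Eᵢⱼ)ᵢⱼ`. Positivity in `M_ι(B)` is
positivity in the C⋆-algebra `CStarMatrix ι ι B`, so a completely positive linear map is in
particular a positive linear map of C⋆-algebras, hence bounded, and each `Lᵢⱼ` is continuous.
The Schur map of `L` is the Schur part `M ↦ (P(Mᵢⱼ Eᵢⱼ)ᵢⱼ)` of `P`, and Schur parts of
completely positive maps are completely positive: the `m`-th amplification of the Schur part at
`M` is a principal submatrix of a higher amplification of `P` at a compression `Tᴴ M T` which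
places every entry of `M` alone in a block of its own. Since taking Schur parts commutes with
forming block maps and fixes Schur maps, the Schur part of the given block map is the
required one. -/

namespace MatPos

section Order

variable {B : Type*} [CStarAlgebra B] [PartialOrder B] [StarOrderedRing B]
  {ι : Type*} [Fintype ι]

theorem iff_nonneg {M : Matrix ι ι B} :
    MatPos M ↔ (0 : CStarMatrix ι ι B) ≤ CStarMatrix.ofMatrix M := by
  classical
  -- instance search does not find these two for `CStarMatrix` unaided
  have : ContinuousFunctionalCalculus ℝ (CStarMatrix ι ι B) IsSelfAdjoint :=
    IsSelfAdjoint.instContinuousFunctionalCalculus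
  have : NonnegSpectrumClass ℝ (CStarMatrix ι ι B) := CStarAlgebra.instNonnegSpectrumClass
  exact (CStarAlgebra.nonneg_iff_eq_star_mul_self (A := CStarMatrix ι ι B)).symm

theorem diag_nonneg {M : Matrix ι ι B} (hM : MatPos M) (i : ι) : 0 ≤ M i i := by
  obtain ⟨N, rfl⟩ := hM
  exact Finset.sum_nonneg fun t _ => star_mul_self_nonneg (N t i)

end Order

variable {B : Type*} [CStarAlgebra B] {ι κ : Type*} [Fintype ι] [Fintype κ]

theorem sum {α : Type*} (s : Finset α) {M : α → Matrix ι ι B} (hM : ∀ a ∈ s, MatPos (M a)) :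
    MatPos (∑ a ∈ s, M a) := by
  let := CStarAlgebra.spectralOrder B
  have := CStarAlgebra.spectralOrderedRing B
  rw [iff_nonneg]
  change (0 : CStarMatrix ι ι B) ≤ CStarMatrix.ofMatrixₗ (R := ℂ) (∑ a ∈ s, M a)
  rw [map_sum]
  exact Finset.sum_nonneg fun a ha => iff_nonneg.mp (hM a ha)

/-- `Pᴴ * P` is the sum over the rows `P t` of the Gram matrices of the square matrices whose
only nonzero row is `P t`. -/
theorem conjTranspose_mul_self (P : Matrix κ ι B) : MatPos (Pᴴ * P) := by
  classical
  rcases isEmpty_or_nonempty ι with hι | ⟨⟨i₀⟩⟩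
  · exact ⟨0, Subsingleton.elim _ _⟩
  let R : κ → Matrix ι ι B := fun t => Matrix.of fun r c => if r = i₀ then P t c else 0
  have hsum : Pᴴ * P = ∑ t, (R t)ᴴ * R t := by
    ext c c'
    simp [R, Matrix.mul_apply, Matrix.sum_apply]
  rw [hsum]
  exact sum _ fun t _ => ⟨R t, rfl⟩

theorem conjTranspose_mul_mul {M : Matrix ι ι B} (hM : MatPos M) (T : Matrix ι κ B) :
    MatPos (Tᴴ * M * T) := by
  obtain ⟨N, rfl⟩ := hM
  rw [show Tᴴ * (Nᴴ * N) * T = (N * T)ᴴ * (N * T) by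
    simp only [Matrix.conjTranspose_mul, Matrix.mul_assoc]]
  exact conjTranspose_mul_self _

theorem submatrix {M : Matrix ι ι B} (hM : MatPos M) (f : κ → ι) : MatPos (M.submatrix f f) := by
  obtain ⟨N, rfl⟩ := hM
  rw [Matrix.submatrix_mul _ _ f id f Function.bijective_id, ← Matrix.conjTranspose_submatrix]
  exact conjTranspose_mul_self _

theorem sum_star_mul_mul_nonneg [PartialOrder B] [StarOrderedRing B] {M : Matrix ι ι B}
    (hM : MatPos M) (w : ι → B) : 0 ≤ ∑ r, ∑ c, star (w r) * M r c * w c := by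
  have h := (hM.conjTranspose_mul_mul (Matrix.replicateCol Unit w)).diag_nonneg ()
  simp only [Matrix.mul_apply, Matrix.conjTranspose_apply, Matrix.replicateCol_apply,
    Finset.sum_mul] at h
  rwa [Finset.sum_comm] at h

end MatPos

theorem Matrix.continuous_single {R ι : Type*} [TopologicalSpace R] [Zero R] [DecidableEq ι]
    (i j : ι) : Continuous (Matrix.single i j : R → Matrix ι ι R) :=
  continuous_pi fun _ => continuous_pi fun _ => continuous_id.if_const _ continuous_const

section SchurPart

variable {R S ι : Type*} [Zero R] [DecidableEq ι]

def entryMap (φ : Matrix ι ι R → Matrix ι ι S) (i j : ι) (a : R) : S :=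
  φ (Matrix.single i j a) i j

def schurPart (φ : Matrix ι ι R → Matrix ι ι S) (M : Matrix ι ι R) : Matrix ι ι S :=
  Matrix.of fun i j => entryMap φ i j (M i j)

theorem schurPart_eq_self {φ : Matrix ι ι R → Matrix ι ι S}
    (hφ : ∀ M N i j, M i j = N i j → φ M i j = φ N i j) : schurPart φ = φ :=
  funext fun M => Matrix.ext fun i j => hφ _ _ i j (Matrix.single_apply_same i j (M i j))

theorem schurPart_blockMap (f : Fin 2 → Fin 2 → Matrix ι ι R → Matrix ι ι S) :
    schurPart (blockMap f) = blockMap fun s t => schurPart (f s t) := by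
  funext M
  ext ⟨s, i⟩ ⟨t, j⟩
  simp only [schurPart, entryMap, blockMap, Matrix.of_apply]
  congr
  ext a b
  simp [Matrix.single_apply]

end SchurPart

section CompletelyPositive

variable {A : Type*} [CStarAlgebra A] {B : Type*} [CStarAlgebra B] {ι : Type*} [Fintype ι]

theorem IsCPMap.matPos_apply {φ : Matrix ι ι A → Matrix ι ι B} (hφ : IsCPMap φ)
    {M : Matrix ι ι A} (hM : MatPos M) : MatPos (φ M) :=
  (hφ 1 _ (hM.submatrix Prod.snd)).submatrix (fun i : ι => ((0 : Fin 1), i))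

theorem continuous_of_map_matPos [PartialOrder A] [StarOrderedRing A] [PartialOrder B]
    [StarOrderedRing B] (Q : Matrix ι ι A →ₗ[ℂ] Matrix ι ι B)
    (hQ : ∀ M, MatPos M → MatPos (Q M)) : Continuous Q := by
  let Q' : CStarMatrix ι ι A →ₚ[ℂ] CStarMatrix ι ι B :=
    .mk₀ (CStarMatrix.ofMatrixₗ.toLinearMap ∘ₗ Q ∘ₗ
        (CStarMatrix.ofMatrixₗ (R := ℂ)).symm.toLinearMap)
      fun M hM => (MatPos.iff_nonneg (M := Q M)).mp (hQ M (MatPos.iff_nonneg.mpr hM))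
  exact map_continuous Q'

variable [DecidableEq ι]

theorem IsCPMap.schurPart {φ : Matrix ι ι A → Matrix ι ι B} (hφ : IsCPMap φ) :
    IsCPMap (_root_.schurPart φ) := by
  intro m M hM
  let e := Fintype.equivFin (Fin m × ι)
  let g : Fin m × ι → Fin (Fintype.card (Fin m × ι)) × ι := fun w => (e w, w.2)
  let T : Matrix (Fin m × ι) (Fin (Fintype.card (Fin m × ι)) × ι) A :=
    Matrix.of fun w u => if w = e.symm u.1 then (if u.2 = w.2 then 1 else 0) else 0
  have hblock : ∀ w w', (Matrix.of fun a b => (Tᴴ * M * T) (e w, a) (e w', b)) =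
      Matrix.single w.2 w'.2 (M w w') := by
    intro w w'
    ext a b
    by_cases ha : a = w.2 <;> by_cases hb : b = w'.2 <;>
      simp [T, Matrix.mul_apply, apply_ite star, ha, hb, Ne.symm]
  have hampl : ampl (_root_.schurPart φ) m M = (ampl φ _ (Tᴴ * M * T)).submatrix g g := by
    ext w w'
    simp only [ampl, Matrix.submatrix_apply, Matrix.of_apply, g, hblock]
    rfl
  rw [hampl]
  exact (hφ _ _ (hM.conjTranspose_mul_mul T)).submatrix g

theorem exists_clm_eq_entryMap (Q : Matrix ι ι A →ₗ[ℂ] Matrix ι ι B) (hQ : IsCPMap Q) :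
    ∃ L : ι → ι → A →L[ℂ] B, ∀ i j, ⇑(L i j) = entryMap Q i j := by
  let := CStarAlgebra.spectralOrder A
  have := CStarAlgebra.spectralOrderedRing A
  let := CStarAlgebra.spectralOrder B
  have := CStarAlgebra.spectralOrderedRing B
  have hQc := continuous_of_map_matPos Q fun _ => hQ.matPos_apply
  exact ⟨fun i j => ⟨Matrix.entryLinearMap ℂ B i j ∘ₗ Q ∘ₗ Matrix.singleLinearMap ℂ i j,
    (hQc.comp (Matrix.continuous_single i j)).matrix_elem i j⟩, fun i j => rfl⟩

theorem IsCPMap.isCPKernel [PartialOrder B] [StarOrderedRing B]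
    {φ : Matrix ι ι A → Matrix ι ι B} (hφ : IsCPMap φ) {L : ι → ι → A →L[ℂ] B}
    (hL : ∀ i j, ⇑(L i j) = entryMap φ i j) : IsCPKernel L := by
  intro m y a b
  let V : Matrix Unit (Fin m × ι) A := Matrix.of fun _ v => if y v.1 = v.2 then a v.1 else 0
  have hblock : ∀ p q, (Matrix.of fun i j => (Vᴴ * V) (p, i) (q, j)) =
      Matrix.single (y p) (y q) (star (a p) * a q) := by
    intro p q
    ext i j
    by_cases hi : y p = i <;> by_cases hj : y q = j <;>
      simp [V, Matrix.mul_apply, hi, hj]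
  have hG := (hφ m _ (MatPos.conjTranspose_mul_self V)).submatrix fun p => (p, y p)
  have hentry : ∀ p q, (ampl φ m (Vᴴ * V)).submatrix (fun p => (p, y p)) (fun p => (p, y p)) p q
      = L (y p) (y q) (star (a p) * a q) := by
    intro p q
    simp only [Matrix.submatrix_apply, ampl, Matrix.of_apply, hblock, hL]
    rfl
  simpa only [hentry] using hG.sum_star_mul_mul_nonneg b

end CompletelyPositive

theorem schurMap_id_eq_schurPart {A B : Type*} [CStarAlgebra A] [CStarAlgebra B] {n : ℕ}
    {φ : Matrix (Fin n) (Fin n) A → Matrix (Fin n) (Fin n) B}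
    {L : Fin n → Fin n → A →L[ℂ] B} (hL : ∀ i j, ⇑(L i j) = entryMap φ i j) :
    schurMap L id = schurPart φ := by
  funext M
  ext i j
  simp [schurMap, schurPart, hL]

/-- if for a finite family `x_1, …, x_n` in `X` there are completely
positive maps `P₁, P₂ : M_n(A) → M_n(L(H))` making the block map
`[[P₁, S_{k_F}], [S_{k_F}*, P₂]]` completely positive, then there are completely
positive kernels `L₁, L₂` on `F` making the block map
`[[S_{L₁}, S_{k_F}], [S_{k_F}*, S_{L₂}]]` completely positive. -/
theorem local_solutions_exist {X : Type*} {A : Type*} [CStarAlgebra A]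
    {H : Type*} [NormedAddCommGroup H] [InnerProductSpace ℂ H] [CompleteSpace H]
    (n : ℕ) (k : X → X → A →L[ℂ] (H →L[ℂ] H)) (x : Fin n → X)
    (P₁ P₂ : Matrix (Fin n) (Fin n) A →ₗ[ℂ] Matrix (Fin n) (Fin n) (H →L[ℂ] H))
    (hP₁ : IsCPMap ⇑P₁) (hP₂ : IsCPMap ⇑P₂)
    (hblock : IsCPMap (blockMap ![![⇑P₁, schurMap k x],
      ![fun C => (schurMap k x Cᴴ)ᴴ, ⇑P₂]])) :
    ∃ L₁ L₂ : Fin n → Fin n → A →L[ℂ] (H →L[ℂ] H),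
      IsCPKernel L₁ ∧ IsCPKernel L₂ ∧
      IsCPMap (blockMap ![![schurMap L₁ (id : Fin n → Fin n), schurMap k x],
        ![fun C => (schurMap k x Cᴴ)ᴴ, schurMap L₂ (id : Fin n → Fin n)]]) := by
  obtain ⟨L₁, hL₁⟩ := exists_clm_eq_entryMap P₁ hP₁
  obtain ⟨L₂, hL₂⟩ := exists_clm_eq_entryMap P₂ hP₂
  refine ⟨L₁, L₂, hP₁.isCPKernel hL₁, hP₂.isCPKernel hL₂, ?_⟩
  have h := hblock.schurPart
  rw [schurPart_blockMap] at h
  convert h using 2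
  funext s t
  fin_cases s <;> fin_cases t
  · exact schurMap_id_eq_schurPart hL₁
  · exact (schurPart_eq_self fun M N i j hMN => by simp [schurMap, hMN]).symm
  · exact (schurPart_eq_self fun M N i j hMN => by simp [schurMap, hMN]).symm
  · exact schurMap_id_eq_schurPart hL₂
end
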